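/- For any positive integer n, the number of cycle-free maps f : {1, …, n−1} → {0, 1, …, n−1} equals the number of labeled trees on n vertices. -/

import Mathlib

/-- A cycle of a map `f` relative to a set `S`: a sequence `a 0, …, a (k-1)` of
elements of `S` with `f (a i) = a (i+1)` for `i < k - 1` and `f (a (k-1)) = a 0`. -/
def HasCycle (S : Finset ℕ) (f : ℕ → ℕ) : Prop :=
  ∃ (k : ℕ) (a : ℕ → ℕ), 0 < k ∧ (∀ i < k, a i ∈ S) ∧
    (∀ i, i + 1 < k → f (a i) = a (i + 1)) ∧ f (a (k - 1)) = a 0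

/-!
A cycle-free map `f` sends every vertex `i ≠ 0` to a "parent" `f i`, and iterating `f` from any
vertex must reach the root `0` (otherwise the orbit, confined to the finite set `{1, …, n-1}`,
would close up into a cycle). The edges `{i, f i}` then form a tree: the depth of a vertex
(number of steps to reach `0`) drops by exactly one along each parent edge, so every walk to the
root is at least as long as the depth, and on a cycle the vertex of maximal depth would need two
distinct parents. Conversely every tree arises from exactly one such map: `f i` is the unique
neighbour of `i` closer to `0`.
-/

open SimpleGraph Function

section ParentMap

variable {V : Type*} {F F' : V → V} {r v w : V}

structure IsParentMap (F : V → V) (r : V) : Prop where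
  map_root : F r = r
  exists_iterate_eq_root : ∀ v, ∃ m, F^[m] v = r

def parentGraph (F : V → V) : SimpleGraph V :=
  SimpleGraph.fromRel fun a b => F a = b

lemma parentGraph_adj : (parentGraph F).Adj v w ↔ v ≠ w ∧ (F v = w ∨ F w = v) :=
  fromRel_adj _ _ _

lemma exists_walk_parentGraph_length_le {m : ℕ} (hm : F^[m] v = r) :
    ∃ p : (parentGraph F).Walk v r, p.length ≤ m := by
  induction m generalizing v with
  | zero =>
    rw [iterate_zero_apply] at hm
    exact hm ▸ ⟨.nil, le_rfl⟩
  | succ m ih =>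
    obtain ⟨p, hp⟩ := ih hm
    by_cases hv : v = F v
    · exact ⟨p.copy hv.symm rfl, by rw [Walk.length_copy]; omega⟩
    · exact ⟨.cons (parentGraph_adj.2 ⟨hv, .inl rfl⟩) p, by rw [Walk.length_cons]; omega⟩

namespace IsParentMap

lemma connected (hF : IsParentMap F r) : (parentGraph F).Connected :=
  (connected_iff_exists_forall_reachable _).2 ⟨r, fun v =>
    let ⟨_, hm⟩ := hF.exists_iterate_eq_root v
    (exists_walk_parentGraph_length_le hm).elim fun p _ => ⟨p.reverse⟩⟩

open scoped Classical in
noncomputable def depth (hF : IsParentMap F r) (v : V) : ℕ :=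
  Nat.find (hF.exists_iterate_eq_root v)

lemma depth_root (hF : IsParentMap F r) : hF.depth r = 0 := by
  classical
  simp [depth]

lemma depth_apply_add_one (hF : IsParentMap F r) (hv : v ≠ r) :
    hF.depth (F v) + 1 = hF.depth v := by
  classical
  exact (Nat.find_comp_succ (p := fun m => F^[m] v = r) _ (hF.exists_iterate_eq_root (F v)) hv).symm

lemma adj_apply (hF : IsParentMap F r) (hv : v ≠ r) : (parentGraph F).Adj v (F v) := by
  refine parentGraph_adj.2 ⟨fun h => ?_, .inl rfl⟩
  have := hF.depth_apply_add_one hv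
  rw [← h] at this
  omega

lemma adj_cases (hF : IsParentMap F r) (h : (parentGraph F).Adj v w) :
    F v = w ∧ hF.depth w + 1 = hF.depth v ∨ F w = v ∧ hF.depth v + 1 = hF.depth w := by
  obtain ⟨hvw, rfl | rfl⟩ := parentGraph_adj.1 h
  · refine .inl ⟨rfl, hF.depth_apply_add_one ?_⟩
    rintro rfl
    exact hvw hF.map_root.symm
  · refine .inr ⟨rfl, hF.depth_apply_add_one ?_⟩
    rintro rfl
    exact hvw hF.map_root

lemma depth_le_depth_add_length (hF : IsParentMap F r) (p : (parentGraph F).Walk v w) :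
    hF.depth v ≤ hF.depth w + p.length := by
  induction p with
  | nil => simp
  | cons h p ih =>
    rw [Walk.length_cons]
    rcases hF.adj_cases h with ⟨-, h⟩ | ⟨-, h⟩ <;> omega

lemma dist_eq_depth (hF : IsParentMap F r) (v : V) : (parentGraph F).dist v r = hF.depth v := by
  classical
  obtain ⟨p, hp⟩ :=
    exists_walk_parentGraph_length_le (Nat.find_spec (hF.exists_iterate_eq_root v))
  obtain ⟨q, hq⟩ := hF.connected.exists_walk_length_eq_dist v r
  have := hF.depth_le_depth_add_length q
  rw [hF.depth_root] at this
  exact le_antisymm ((dist_le p).trans hp) (by omega)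

lemma apply_eq_of_adj_of_dist_lt (hF : IsParentMap F r) (h : (parentGraph F).Adj v w)
    (hd : (parentGraph F).dist w r < (parentGraph F).dist v r) : F v = w := by
  rw [hF.dist_eq_depth, hF.dist_eq_depth] at hd
  rcases hF.adj_cases h with ⟨h, -⟩ | ⟨-, h⟩
  · exact h
  · omega

lemma isAcyclic (hF : IsParentMap F r) : (parentGraph F).IsAcyclic := by
  classical
  intro v c hc
  obtain ⟨u, hu, hmax⟩ := c.support.toFinset.exists_max_image hF.depth ⟨v, by simp⟩
  rw [List.mem_toFinset] at hu
  set c' := c.rotate u hu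
  have hc' : c'.IsCycle := hc.rotate hu
  -- Both cycle-neighbours of the deepest vertex `u` are shallower, hence both are `F u`.
  have hparent : ∀ w ∈ c'.support, (parentGraph F).Adj u w → F u = w := by
    intro w hw h
    have := hmax w (List.mem_toFinset.2 ((c.mem_support_rotate_iff u hu).1 hw))
    rcases hF.adj_cases h with ⟨h, -⟩ | ⟨-, h⟩
    · exact h
    · omega
  have hsnd := hparent _ (c'.getVert_mem_support 1) (c'.adj_snd hc'.not_nil)
  have hpen := hparent _ (c'.getVert_mem_support _) (c'.adj_penultimate hc'.not_nil).symm
  exact hc'.snd_ne_penultimate (hsnd.symm.trans hpen)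

lemma isTree (hF : IsParentMap F r) : (parentGraph F).IsTree :=
  ⟨hF.connected, hF.isAcyclic⟩

lemma eq_of_parentGraph_eq (hF : IsParentMap F r) (hF' : IsParentMap F' r)
    (h : parentGraph F = parentGraph F') : F = F' := by
  funext v
  by_cases hv : v = r
  · rw [hv, hF.map_root, hF'.map_root]
  · refine hF.apply_eq_of_adj_of_dist_lt (h ▸ hF'.adj_apply hv) ?_
    rw [h, hF'.dist_eq_depth, hF'.dist_eq_depth, ← hF'.depth_apply_add_one hv]
    omega

end IsParentMap

variable {G : SimpleGraph V}

lemma SimpleGraph.Connected.exists_adj_dist_lt (hG : G.Connected) (hv : v ≠ r) :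
    ∃ w, G.Adj v w ∧ G.dist w r < G.dist v r := by
  obtain ⟨p, hp⟩ := hG.exists_walk_length_eq_dist v r
  cases p with
  | nil => exact absurd rfl hv
  | cons h q =>
    rw [Walk.length_cons] at hp
    exact ⟨_, h, (dist_le q).trans_lt (by omega)⟩

open scoped Classical in
noncomputable def parentMap (G : SimpleGraph V) (r : V) (v : V) : V :=
  if h : ∃ w, G.Adj v w ∧ G.dist w r < G.dist v r then h.choose else r

lemma parentMap_root : parentMap G r r = r :=
  dif_neg (by simp)

lemma parentMap_spec (hG : G.Connected) (hv : v ≠ r) :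
    G.Adj v (parentMap G r v) ∧ G.dist (parentMap G r v) r < G.dist v r := by
  rw [parentMap, dif_pos (hG.exists_adj_dist_lt hv)]
  exact (hG.exists_adj_dist_lt hv).choose_spec

lemma isParentMap_parentMap (hG : G.Connected) : IsParentMap (parentMap G r) r := by
  refine ⟨parentMap_root, fun v => ?_⟩
  induction hd : G.dist v r using Nat.strong_induction_on generalizing v with
  | _ d ih =>
    by_cases hv : v = r
    · exact ⟨0, hv⟩
    · obtain ⟨m, hm⟩ := ih _ (hd ▸ (parentMap_spec hG hv).2) _ rfl
      exact ⟨m + 1, hm⟩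

lemma parentGraph_parentMap (hG : G.IsTree) : parentGraph (parentMap G r) = G := by
  have hle : parentGraph (parentMap G r) ≤ G := by
    intro v w h
    obtain ⟨hvw, rfl | rfl⟩ := parentGraph_adj.1 h
    · refine (parentMap_spec hG.connected fun hv => hvw ?_).1
      rw [hv, parentMap_root]
    · refine (parentMap_spec hG.connected fun hw => hvw ?_).1.symm
      rw [hw, parentMap_root]
  exact le_antisymm hle ((isTree_iff_minimal_connected.1 hG).le_of_le
    (isParentMap_parentMap hG.connected).connected hle)

lemma image_parentGraph_setOf_isParentMap (r : V) :
    parentGraph '' {F | IsParentMap F r} = {G : SimpleGraph V | G.IsTree} := by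
  ext G
  constructor
  · rintro ⟨F, hF, rfl⟩
    exact hF.isTree
  · intro hG
    exact ⟨_, isParentMap_parentMap hG.connected, parentGraph_parentMap hG⟩

lemma injOn_parentGraph_setOf_isParentMap (r : V) :
    Set.InjOn parentGraph {F : V → V | IsParentMap F r} :=
  fun _ hF _ hF' h => hF.eq_of_parentGraph_eq hF' h

end ParentMap

section HasCycle

variable {S : Finset ℕ} {f : ℕ → ℕ} {r : ℕ}

lemma hasCycle_iff_exists_isPeriodicPt :
    HasCycle S f ↔ ∃ x k, 0 < k ∧ IsPeriodicPt f k x ∧ ∀ m, f^[m] x ∈ S := by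
  constructor
  · rintro ⟨k, a, hk, haS, hstep, hlast⟩
    have horbit : ∀ i < k, f^[i] (a 0) = a i := by
      intro i hi
      induction i with
      | zero => rfl
      | succ i ih => rw [iterate_succ_apply', ih (by omega), hstep i hi]
    have hper : IsPeriodicPt f k (a 0) := by
      obtain ⟨j, rfl⟩ := Nat.exists_eq_add_one_of_ne_zero hk.ne'
      rw [IsPeriodicPt, IsFixedPt, iterate_succ_apply', horbit j (by omega), ← hlast]
      rfl
    refine ⟨a 0, k, hk, hper, fun m => ?_⟩
    rw [← hper.iterate_mod_apply, horbit _ (Nat.mod_lt _ hk)]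
    exact haS _ (Nat.mod_lt _ hk)
  · rintro ⟨x, k, hk, hper, hS⟩
    refine ⟨k, fun i => f^[i] x, hk, fun i _ => hS i,
      fun i _ => (iterate_succ_apply' ..).symm, ?_⟩
    show f (f^[k - 1] x) = x
    rw [← iterate_succ_apply' f, Nat.succ_eq_add_one, Nat.sub_add_cancel hk]
    exact hper

lemma not_hasCycle_iff_forall_exists_iterate_eq (hr : r ∉ S)
    (hmaps : ∀ x ∈ S, f x = r ∨ f x ∈ S) :
    ¬HasCycle S f ↔ ∀ x ∈ S, ∃ m, f^[m] x = r := by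
  rw [hasCycle_iff_exists_isPeriodicPt]
  constructor
  · intro hcyc x hx
    by_contra! hne
    have horbit : ∀ m, f^[m] x ∈ S := by
      intro m
      induction m with
      | zero => exact hx
      | succ m ih =>
        rw [iterate_succ_apply']
        exact (hmaps _ ih).resolve_left fun h => hne (m + 1) (by rwa [iterate_succ_apply'])
    obtain ⟨s, t, hst, hrep⟩ := S.finite_toSet.exists_lt_map_eq_of_forall_mem horbit
    refine hcyc ⟨f^[s] x, t - s, by omega, ?_, fun m => ?_⟩
    · rw [IsPeriodicPt, IsFixedPt, ← iterate_add_apply, Nat.sub_add_cancel hst.le, hrep]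
    · rw [← iterate_add_apply]
      exact horbit _
  · rintro h ⟨x, k, -, -, hS⟩
    obtain ⟨m, hm⟩ := h x (hS 0)
    exact hr (hm ▸ hS m)

end HasCycle

section ExtendByZero

variable {n : ℕ}

def extendByZero (F : Fin n → Fin n) (x : ℕ) : ℕ :=
  if h : x < n then F ⟨x, h⟩ else 0

lemma extendByZero_val (F : Fin n → Fin n) (i : Fin n) : extendByZero F i = F i :=
  dif_pos i.isLt

lemma extendByZero_of_le (F : Fin n → Fin n) {x : ℕ} (hx : n ≤ x) : extendByZero F x = 0 :=
  dif_neg (by omega)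

lemma iterate_extendByZero_val (F : Fin n → Fin n) (m : ℕ) (i : Fin n) :
    (extendByZero F)^[m] i = F^[m] i :=
  ((Semiconj.iterate_right (fun i => (extendByZero_val F i).symm) m) i).symm

lemma extendByZero_injective : Injective (extendByZero (n := n)) := by
  intro F F' h
  funext i
  apply Fin.ext
  rw [← extendByZero_val, h, extendByZero_val]

lemma not_hasCycle_extendByZero_iff [NeZero n] (F : Fin n → Fin n) :
    ¬HasCycle (Finset.Ico 1 n) (extendByZero F) ↔ ∀ v, ∃ m, F^[m] v = 0 := by
  have hmaps : ∀ x ∈ Finset.Ico 1 n,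
      extendByZero F x = 0 ∨ extendByZero F x ∈ Finset.Ico 1 n := by
    intro x hx
    rw [Finset.mem_Ico] at hx ⊢
    have hval : extendByZero F x = F ⟨x, hx.2⟩ := extendByZero_val F ⟨x, hx.2⟩
    have := (F ⟨x, hx.2⟩).isLt
    omega
  rw [not_hasCycle_iff_forall_exists_iterate_eq (by simp) hmaps]
  constructor
  · intro h v
    rcases eq_or_ne v 0 with rfl | hv
    · exact ⟨0, rfl⟩
    have hv' : (v : ℕ) ∈ Finset.Ico 1 n :=
      Finset.mem_Ico.2 ⟨Nat.one_le_iff_ne_zero.2 (Fin.val_ne_zero_iff.2 hv), v.isLt⟩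
    obtain ⟨m, hm⟩ := h v hv'
    exact ⟨m, by rwa [iterate_extendByZero_val, Fin.val_eq_zero_iff] at hm⟩
  · intro h x hx
    obtain ⟨m, hm⟩ := h ⟨x, (Finset.mem_Ico.1 hx).2⟩
    exact ⟨m, by rw [show x = (⟨x, (Finset.mem_Ico.1 hx).2⟩ : Fin n) from rfl,
      iterate_extendByZero_val, hm, Fin.val_zero]⟩

lemma setOf_cycleFree_eq_image_extendByZero [NeZero n] :
    {f : ℕ → ℕ | (∀ i ∈ Finset.Ico 1 n, f i < n) ∧
      (∀ i ∉ Finset.Ico 1 n, f i = 0) ∧ ¬ HasCycle (Finset.Ico 1 n) f} =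
    extendByZero '' {F : Fin n → Fin n | IsParentMap F 0} := by
  ext f
  simp only [Set.mem_image]
  constructor
  · rintro ⟨hlt, hzero, hcyc⟩
    have hf0 : f 0 = 0 := hzero 0 (by simp)
    have hlt' : ∀ x < n, f x < n := fun x hx => by
      rcases Nat.eq_zero_or_pos x with rfl | hx0
      · rwa [hf0]
      · exact hlt x (Finset.mem_Ico.2 ⟨hx0, hx⟩)
    set F : Fin n → Fin n := fun i => ⟨f i, hlt' i i.isLt⟩
    have hF : extendByZero F = f := by
      funext x
      by_cases hx : x < n
      · exact dif_pos hx
      · rw [extendByZero_of_le F (not_lt.1 hx), hzero x (by simp [hx])]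
    rw [← hF] at hcyc
    exact ⟨F, ⟨Fin.ext hf0, (not_hasCycle_extendByZero_iff F).1 hcyc⟩, hF⟩
  · rintro ⟨F, hF, rfl⟩
    refine ⟨fun i hi => ?_, fun i hi => ?_,
      (not_hasCycle_extendByZero_iff F).2 hF.exists_iterate_eq_root⟩
    · have hi' := (Finset.mem_Ico.1 hi).2
      have hval : extendByZero F i = F ⟨i, hi'⟩ := extendByZero_val F ⟨i, hi'⟩
      exact hval ▸ Fin.isLt _
    · rcases le_or_gt n i with hni | hin
      · exact extendByZero_of_le F hni
      · obtain rfl : i = 0 := by simp [Finset.mem_Ico] at hi; omega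
        rw [← Fin.val_zero n, extendByZero_val, hF.map_root, Fin.val_zero]

end ExtendByZero

/-- For any positive integer `n`, the number of cycle-free maps
`f : {1, …, n-1} → {0, 1, …, n-1}` (encoded as functions `ℕ → ℕ` vanishing outside
`{1, …, n-1} = Finset.Ico 1 n`) equals the number of labeled trees on `n` vertices,
i.e. connected acyclic simple graphs on the vertex set `{0, 1, …, n-1}`. -/
theorem card_cycleFree_eq_card_trees (n : ℕ) (hn : 0 < n) :
    {f : ℕ → ℕ | (∀ i ∈ Finset.Ico 1 n, f i < n) ∧
      (∀ i ∉ Finset.Ico 1 n, f i = 0) ∧ ¬ HasCycle (Finset.Ico 1 n) f}.ncard =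
    {G : SimpleGraph (Fin n) | G.IsTree}.ncard := by
  have : NeZero n := ⟨hn.ne'⟩
  rw [setOf_cycleFree_eq_image_extendByZero, Set.ncard_image_of_injective _ extendByZero_injective,
    ← image_parentGraph_setOf_isParentMap, (injOn_parentGraph_setOf_isParentMap _).ncard_image]
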